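/- Let ν ≥ 3, let Ψ be a set of coverings with #Ψ ≥ 2 which is decomposable via a nonempty proper E ⊆ Γ_{2ν}. For ψ ∈ Ψ define p⁰_ψ = Σ_{∅ ≠ A₁ ⊊ E∩A} (−1)^{#A₁} X^{A₁} X^{(E∩B) ∖ ψ(A₁)} and q⁰_ψ = Σ_{∅ ≠ A₂ ⊊ E'∩A} (−1)^{#A₂} X^{A₂} X^{(E'∩B) ∖ ψ(A₂)}, where X^S = ∏_{j∈S} X_j; note p⁰_ψ depends only on ψ|_{E∩A} and q⁰_ψ only on ψ|_{E'∩A}. Suppose the finitely many distinct polynomials {p⁰_ψ : ψ ∈ Ψ} form a linearly independent family over ℂ and likewise the distinct polynomials {q⁰_ψ : ψ ∈ Ψ} form a linearly independent family. If F_Ψ splits across the bipartition (E,E'), then Ψ is factorable via E, i.e., for all ψ₁, ψ₂ ∈ Ψ there exists ψ ∈ Ψ agreeing with ψ₁ on E∩A and with ψ₂ on E'∩A. -/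

import Mathlib

open MvPolynomial Finset

noncomputable section

/-- The odd-labelled site `2t−1` of the paper (`t`-th site of sublattice `A`),
zero-indexed as `2t` in `Fin (2ν)`. -/
def siteA (ν : ℕ) (t : Fin ν) : Fin (2 * ν) := ⟨2 * t.val, by have := t.isLt; omega⟩

/-- The even-labelled site `2t` of the paper (`t`-th site of sublattice `B`),
zero-indexed as `2t+1` in `Fin (2ν)`. -/
def siteB (ν : ℕ) (t : Fin ν) : Fin (2 * ν) := ⟨2 * t.val + 1, by have := t.isLt; omega⟩

/-- A covering is a bijection `ψ : A → B`; it is encoded by the permutation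
`σ` of `Fin ν` with `ψ(siteA t) = siteB (σ t)`.  Its covering polynomial is
`F_ψ = ∏_{a∈A} (X_{ψ(a)} − X_a)`. -/
def covPoly (ν : ℕ) (σ : Equiv.Perm (Fin ν)) : MvPolynomial (Fin (2 * ν)) ℂ :=
  ∏ t : Fin ν, (X (siteB ν (σ t)) - X (siteA ν t))

/-- `F` splits across the bipartition `(E, Eᶜ)`. -/
def SplitsAcross {n : ℕ} (F : MvPolynomial (Fin n) ℂ) (E : Finset (Fin n)) : Prop :=
  ∃ p q : MvPolynomial (Fin n) ℂ, F = p * q ∧ p.vars ⊆ E ∧ q.vars ⊆ Eᶜ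

/-- `ψ(E ∩ A) = E ∩ B` for the covering `ψ` encoded by `σ`
(here `E ∩ B` is the set of odd-indexed, i.e. `B`-sublattice, elements of `E`). -/
def MapsCut (ν : ℕ) (σ : Equiv.Perm (Fin ν)) (E : Finset (Fin (2 * ν))) : Prop :=
  ((Finset.univ.filter (fun t => siteA ν t ∈ E)).image fun t => siteB ν (σ t))
    = E.filter (fun x => x.val % 2 = 1)


/-- The (unnormalized) RVB polynomial `F_Ψ = Σ_{ψ∈Ψ} F_ψ`. -/
def rvbPoly (ν : ℕ) (Ψ : Finset (Equiv.Perm (Fin ν))) : MvPolynomial (Fin (2 * ν)) ℂ :=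
  ∑ σ ∈ Ψ, covPoly ν σ

/-- `p⁰_ψ = Σ_{∅ ≠ A₁ ⊊ E∩A} (−1)^{#A₁} X^{A₁} X^{(E∩B) ∖ ψ(A₁)}`, with subsets of
`E∩A` (resp. `E∩B`) encoded as subsets `T` of `Fin ν` with `siteA t ∈ E`
(resp. `siteB u ∈ E`). -/
def p0Poly (ν : ℕ) (E : Finset (Fin (2 * ν))) (σ : Equiv.Perm (Fin ν)) :
    MvPolynomial (Fin (2 * ν)) ℂ :=
  ∑ T ∈ (Finset.univ.filter (fun t => siteA ν t ∈ E)).powerset.filter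
      (fun T => T.Nonempty ∧ T ≠ Finset.univ.filter (fun t => siteA ν t ∈ E)),
    C ((-1 : ℂ) ^ T.card) *
      ((∏ t ∈ T, X (siteA ν t)) *
        ∏ u ∈ (Finset.univ.filter (fun u => siteB ν u ∈ E)) \ (T.image fun t => σ t),
          X (siteB ν u))

/-- `q⁰_ψ = Σ_{∅ ≠ A₂ ⊊ E'∩A} (−1)^{#A₂} X^{A₂} X^{(E'∩B) ∖ ψ(A₂)}`. -/
def q0Poly (ν : ℕ) (E : Finset (Fin (2 * ν))) (σ : Equiv.Perm (Fin ν)) :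
    MvPolynomial (Fin (2 * ν)) ℂ :=
  ∑ T ∈ (Finset.univ.filter (fun t => siteA ν t ∉ E)).powerset.filter
      (fun T => T.Nonempty ∧ T ≠ Finset.univ.filter (fun t => siteA ν t ∉ E)),
    C ((-1 : ℂ) ^ T.card) *
      ((∏ t ∈ T, X (siteA ν t)) *
        ∏ u ∈ (Finset.univ.filter (fun u => siteB ν u ∉ E)) \ (T.image fun t => σ t),
          X (siteB ν u))

/-!
Cutting the covering polynomial at `E` gives `F_ψ = P_ψ Q_ψ`, with `P_ψ` in the variables of `E`
and `Q_ψ` in those of `E'`. Up to a summand that does not depend on `ψ`, `P_ψ` is `p⁰_ψ`;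
evaluating at `X_a = 0`, `X_b = 1` kills every `p⁰_ψ` but not that summand, so the distinct
`P_ψ` are linearly independent, and likewise the `Q_ψ`. Applying `g ⊗ h` to
`∑_ψ P_ψ Q_ψ = F_Ψ = p q`, with `g`, `h` dual to the `P`'s and `Q`'s, shows that the number
`N(ψ₁, ψ₂)` of `ψ ∈ Ψ` with `P_ψ = P_ψ₁` and `Q_ψ = Q_ψ₂` equals `g(p) h(q)`. This matrix has rank
one and a positive diagonal, so `N(ψ₁, ψ₂) ≠ 0`. Finally `P_ψ` determines `ψ` on `E ∩ A`.
-/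

section LinearAlgebra

variable {K V : Type*} [Field K] [AddCommGroup V] [Module K V] {S : Set V}

open scoped Classical in
theorem LinearIndepOn.exists_dual_eq_ite (hS : LinearIndepOn K id S) {v : V} (hv : v ∈ S) :
    ∃ g : V →ₗ[K] K, ∀ w ∈ S, g w = if w = v then 1 else 0 := by
  let b := Module.Basis.extend hS
  refine ⟨b.coord ⟨v, hS.subset_extend _ hv⟩, fun w hw => ?_⟩
  have hbw : b ⟨w, hS.subset_extend _ hw⟩ = w := Module.Basis.extend_apply_self hS _
  rw [← hbw, Module.Basis.coord_apply, Module.Basis.repr_self, Finsupp.single_apply]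
  simp only [Subtype.mk.injEq, hbw]

theorem LinearIndepOn.image_add_const (hS : LinearIndepOn K id S) (φ : V →ₗ[K] K)
    (hφS : ∀ v ∈ S, φ v = 0) {c : V} (hc : φ c = 1) :
    LinearIndepOn K id ((· + c) '' S) := by
  rw [← linearIndepOn_iff_image (add_left_injective c).injOn]
  -- `x ↦ x - φ x • c` undoes the translation on `S`
  refine LinearIndepOn.of_comp (LinearMap.id - φ.smulRight c) (hS.congr fun v hv => ?_)
  simp [hφS v hv, hc]

end LinearAlgebra

namespace MvPolynomial

section SplitFunctional

variable {κ K : Type*} [Field K] (E : Set κ) (g h : MvPolynomial κ K →ₗ[K] K)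

open scoped Classical in
/-- The functional `g ⊗ h` on `K[X_E] ⊗ K[X_{Eᶜ}] ≅ K[X_κ]`. -/
def splitFunctional : MvPolynomial κ K →ₗ[K] K :=
  (basisMonomials κ K).constr K fun m =>
    g (monomial (m.filter (· ∈ E)) 1) * h (monomial (m.filter (· ∉ E)) 1)

variable {E g h}

theorem monomial_eq_smul_monomial_one (m : κ →₀ ℕ) (c : K) :
    monomial m c = c • monomial m (1 : K) := by
  rw [smul_monomial, smul_eq_mul, mul_one]

open scoped Classical in
theorem splitFunctional_monomial_one (m : κ →₀ ℕ) :
    splitFunctional E g h (monomial m 1) =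
      g (monomial (m.filter (· ∈ E)) 1) * h (monomial (m.filter (· ∉ E)) 1) :=
  (basisMonomials κ K).constr_basis K _ m

theorem splitFunctional_monomial_mul_monomial {a b : κ →₀ ℕ} (ha : ∀ x ∈ a.support, x ∈ E)
    (hb : ∀ x ∈ b.support, x ∉ E) (c d : K) :
    splitFunctional E g h (monomial a c * monomial b d) = g (monomial a c) * h (monomial b d) := by
  classical
  have hfa : a.filter (· ∈ E) = a :=
    (Finsupp.filter_eq_self_iff _ _).2 fun x hx => ha x (Finsupp.mem_support_iff.2 hx)
  have hfb : b.filter (· ∈ E) = 0 :=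
    (Finsupp.filter_eq_zero_iff _ _).2 fun x hx =>
      Finsupp.notMem_support_iff.1 fun h => hb x h hx
  have hfa' : a.filter (· ∉ E) = 0 :=
    (Finsupp.filter_eq_zero_iff _ _).2 fun x hx =>
      Finsupp.notMem_support_iff.1 fun h => hx (ha x h)
  have hfb' : b.filter (· ∉ E) = b :=
    (Finsupp.filter_eq_self_iff _ _).2 fun x hx => hb x (Finsupp.mem_support_iff.2 hx)
  rw [monomial_mul, monomial_eq_smul_monomial_one (a + b), monomial_eq_smul_monomial_one a,
    monomial_eq_smul_monomial_one b, map_smul, map_smul, map_smul,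
    splitFunctional_monomial_one]
  simp only [Finsupp.filter_add, hfa, hfb, hfa', hfb', add_zero, zero_add, smul_eq_mul]
  ring

theorem splitFunctional_mul {u v : MvPolynomial κ K} (hu : ∀ x ∈ u.vars, x ∈ E)
    (hv : ∀ x ∈ v.vars, x ∉ E) : splitFunctional E g h (u * v) = g u * h v := by
  conv_lhs => rw [u.as_sum, v.as_sum, Finset.sum_mul_sum, map_sum]
  conv_rhs => rw [u.as_sum, v.as_sum, map_sum, map_sum, Finset.sum_mul_sum]
  refine Finset.sum_congr rfl fun a ha => ?_
  rw [map_sum]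
  refine Finset.sum_congr rfl fun b hb => ?_
  exact splitFunctional_monomial_mul_monomial
    (fun x hx => hu x ((mem_vars_iff_mem_support x).2 ⟨a, ha, hx⟩))
    (fun x hx => hv x ((mem_vars_iff_mem_support x).2 ⟨b, hb, hx⟩)) _ _

end SplitFunctional

variable {κ K ι : Type*} [Field K] [CharZero K]

theorem exists_eq_and_eq_of_sum_mul_eq_mul {s : Finset ι} {P Q : ι → MvPolynomial κ K}
    {p q : MvPolynomial κ K} {E : Set κ}
    (hP : ∀ i ∈ s, ∀ x ∈ (P i).vars, x ∈ E) (hQ : ∀ i ∈ s, ∀ x ∈ (Q i).vars, x ∉ E)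
    (hp : ∀ x ∈ p.vars, x ∈ E) (hq : ∀ x ∈ q.vars, x ∉ E)
    (hPind : LinearIndepOn K id (P '' s)) (hQind : LinearIndepOn K id (Q '' s))
    (hsum : ∑ k ∈ s, P k * Q k = p * q) {i j : ι} (hi : i ∈ s) (hj : j ∈ s) :
    ∃ k ∈ s, P k = P i ∧ Q k = Q j := by
  classical
  choose! g hg using fun a (ha : a ∈ s) => hPind.exists_dual_eq_ite (Set.mem_image_of_mem P ha)
  choose! h hh using fun b (hb : b ∈ s) => hQind.exists_dual_eq_ite (Set.mem_image_of_mem Q hb)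
  let N a b : ℕ := #{k ∈ s | P k = P a ∧ Q k = Q b}
  -- apply `g a ⊗ h b` to both sides of `hsum`
  have hN : ∀ a ∈ s, ∀ b ∈ s, (N a b : K) = g a p * h b q := by
    intro a ha b hb
    rw [← splitFunctional_mul hp hq, ← hsum, map_sum, natCast_card_filter]
    refine Finset.sum_congr rfl fun k hk => ?_
    rw [splitFunctional_mul (hP k hk) (hQ k hk), hg a ha _ (Set.mem_image_of_mem P hk),
      hh b hb _ (Set.mem_image_of_mem Q hk), ite_zero_mul_ite_zero, mul_one]
    congr
  have hNpos : ∀ a ∈ s, N a a ≠ 0 := fun a ha =>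
    Finset.card_ne_zero.2 ⟨a, Finset.mem_filter.2 ⟨ha, rfl, rfl⟩⟩
  have hrank : (N i j : K) * N j i = N i i * N j j := by
    rw [hN i hi j hj, hN j hj i hi, hN i hi i hi, hN j hj j hj]
    ring
  have hNij : N i j ≠ 0 := by
    intro h0
    rw [h0, Nat.cast_zero, zero_mul, eq_comm, mul_eq_zero, Nat.cast_eq_zero,
      Nat.cast_eq_zero] at hrank
    exact hrank.elim (hNpos i hi) (hNpos j hj)
  obtain ⟨k, hk⟩ := Finset.card_ne_zero.1 hNij
  exact ⟨k, (Finset.mem_filter.1 hk).1, (Finset.mem_filter.1 hk).2⟩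

end MvPolynomial

theorem Equiv.Perm.image_univ_filter {α : Type*} [Fintype α] [DecidableEq α] (σ : Equiv.Perm α)
    {p q : α → Prop} [DecidablePred p] [DecidablePred q] (h : ∀ t, q (σ t) ↔ p t) :
    (univ.filter p).image σ = univ.filter q := by
  ext u
  simp only [mem_image, mem_filter, mem_univ, true_and]
  exact ⟨fun ⟨t, ht, htu⟩ => htu ▸ (h t).2 ht,
    fun hu => ⟨σ.symm u, (h _).1 (by rwa [σ.apply_symm_apply]), σ.apply_symm_apply u⟩⟩

section Coverings

variable {ν : ℕ}

@[simp]
theorem siteA_inj {t u : Fin ν} : siteA ν t = siteA ν u ↔ t = u := by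
  simp [siteA, Fin.ext_iff]

@[simp]
theorem siteB_inj {t u : Fin ν} : siteB ν t = siteB ν u ↔ t = u := by
  simp [siteB, Fin.ext_iff]

@[simp]
theorem siteA_ne_siteB (t u : Fin ν) : siteA ν t ≠ siteB ν u := by
  simp only [siteA, siteB, ne_eq, Fin.mk.injEq]
  omega

@[simp]
theorem siteB_ne_siteA (t u : Fin ν) : siteB ν u ≠ siteA ν t :=
  (siteA_ne_siteB t u).symm

theorem MapsCut.siteB_mem_iff {σ : Equiv.Perm (Fin ν)} {E : Finset (Fin (2 * ν))}
    (h : MapsCut ν σ E) (t : Fin ν) : siteB ν (σ t) ∈ E ↔ siteA ν t ∈ E := by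
  have hB : ∀ u, siteB ν u ∈ E ↔ ∃ s, siteA ν s ∈ E ∧ σ s = u := fun u => by
    have hodd : (siteB ν u : ℕ) % 2 = 1 := by simp [siteB]
    simpa [hodd] using (Finset.ext_iff.1 h (siteB ν u)).symm
  rw [hB]
  exact ⟨fun ⟨s, hs, hst⟩ => σ.injective hst ▸ hs, fun ht => ⟨t, ht, rfl⟩⟩

variable (ν) in
def covPolyOn (S : Finset (Fin ν)) (σ : Equiv.Perm (Fin ν)) : MvPolynomial (Fin (2 * ν)) ℂ :=
  ∏ t ∈ S, (X (siteB ν (σ t)) - X (siteA ν t))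

variable (ν) in
def covTerm (SB : Finset (Fin ν)) (σ : Equiv.Perm (Fin ν)) (T : Finset (Fin ν)) :
    MvPolynomial (Fin (2 * ν)) ℂ :=
  (∏ t ∈ T, X (siteA ν t)) * ∏ u ∈ SB \ (T.image fun t => σ t), X (siteB ν u)

variable (ν) in
/-- `p0Poly ν E` and `q0Poly ν E` are `covPolyOnMid ν S SB` for `S`, `SB` the `A`- and `B`-sites
inside, resp. outside, `E`. -/
def covPolyOnMid (S SB : Finset (Fin ν)) (σ : Equiv.Perm (Fin ν)) : MvPolynomial (Fin (2 * ν)) ℂ :=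
  ∑ T ∈ S.powerset.filter (fun T => T.Nonempty ∧ T ≠ S), C ((-1 : ℂ) ^ T.card) * covTerm ν SB σ T

theorem covPoly_eq_covPolyOn_mul_covPolyOn (σ : Equiv.Perm (Fin ν)) (p : Fin ν → Prop)
    [DecidablePred p] :
    covPoly ν σ = covPolyOn ν (univ.filter p) σ * covPolyOn ν (univ.filter fun t => ¬p t) σ :=
  (prod_filter_mul_prod_filter_not univ p _).symm

theorem covPolyOn_eq_sum {S SB : Finset (Fin ν)} {σ : Equiv.Perm (Fin ν)}
    (hσ : S.image σ = SB) :
    covPolyOn ν S σ = ∑ T ∈ S.powerset, C ((-1 : ℂ) ^ T.card) * covTerm ν SB σ T := by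
  simp_rw [covPolyOn, sub_eq_neg_add, prod_add]
  refine sum_congr rfl fun T _ => ?_
  rw [prod_neg, covTerm, ← hσ, ← image_sdiff S T σ.injective, prod_image σ.injective.injOn,
    mul_assoc]
  simp

theorem covPolyOn_sub_covPolyOnMid {S SB : Finset (Fin ν)} {σ τ : Equiv.Perm (Fin ν)}
    (hσ : S.image σ = SB) (hτ : S.image τ = SB) :
    covPolyOn ν S σ - covPolyOnMid ν S SB σ = covPolyOn ν S τ - covPolyOnMid ν S SB τ := by
  have hsplit : ∀ ρ : Equiv.Perm (Fin ν), S.image ρ = SB →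
      covPolyOn ν S ρ - covPolyOnMid ν S SB ρ = ∑ T ∈ S.powerset.filter
        (fun T => ¬(T.Nonempty ∧ T ≠ S)), C ((-1 : ℂ) ^ T.card) * covTerm ν SB ρ T :=
    fun ρ hρ => by
      rw [covPolyOn_eq_sum hρ, ← sum_filter_add_sum_filter_not _ (fun T => T.Nonempty ∧ T ≠ S),
        covPolyOnMid, add_sub_cancel_left]
  rw [hsplit σ hσ, hsplit τ hτ]
  refine sum_congr rfl fun T hT => ?_
  -- only `T = ∅` and `T = S` remain, and `σ`, `τ` agree on their images
  have himage : T.image σ = T.image τ := by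
    rcases T.eq_empty_or_nonempty with rfl | hne
    · simp
    · have hTS : T = S := by simpa [hne] using (mem_filter.1 hT).2
      rw [hTS, hσ, hτ]
  simp only [covTerm, himage]

variable (ν) in
def siteBIndicator : Fin (2 * ν) → ℂ := fun i => ((i : ℕ) % 2 : ℕ)

@[simp]
theorem siteBIndicator_siteA (t : Fin ν) : siteBIndicator ν (siteA ν t) = 0 := by
  simp [siteBIndicator, siteA]

@[simp]
theorem siteBIndicator_siteB (u : Fin ν) : siteBIndicator ν (siteB ν u) = 1 := by
  simp [siteBIndicator, siteB]

theorem eval_siteBIndicator_covPolyOn (S : Finset (Fin ν)) (σ : Equiv.Perm (Fin ν)) :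
    eval (siteBIndicator ν) (covPolyOn ν S σ) = 1 := by
  simp [covPolyOn]

theorem eval_siteBIndicator_covPolyOnMid (S SB : Finset (Fin ν)) (σ : Equiv.Perm (Fin ν)) :
    eval (siteBIndicator ν) (covPolyOnMid ν S SB σ) = 0 := by
  rw [covPolyOnMid, eval_sum]
  refine sum_eq_zero fun T hT => ?_
  simp [covTerm, zero_pow (card_ne_zero.2 (mem_filter.1 hT).2.1)]

theorem linearIndepOn_image_covPolyOn {S SB : Finset (Fin ν)} {Ψ : Set (Equiv.Perm (Fin ν))}
    (hΨ : ∀ σ ∈ Ψ, S.image σ = SB) (h : LinearIndepOn ℂ id (covPolyOnMid ν S SB '' Ψ)) :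
    LinearIndepOn ℂ id (covPolyOn ν S '' Ψ) := by
  rcases Ψ.eq_empty_or_nonempty with rfl | ⟨σ₀, hσ₀⟩
  · simp [linearIndepOn_empty]
  set c := covPolyOn ν S σ₀ - covPolyOnMid ν S SB σ₀ with hc
  have himage : covPolyOn ν S '' Ψ = (· + c) '' (covPolyOnMid ν S SB '' Ψ) := by
    rw [Set.image_image]
    refine Set.image_congr fun σ hσ => ?_
    rw [hc, ← covPolyOn_sub_covPolyOnMid (hΨ σ hσ) (hΨ σ₀ hσ₀), add_sub_cancel]
  rw [himage]
  refine h.image_add_const (aeval (siteBIndicator ν)).toLinearMap ?_ ?_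
  · rintro _ ⟨σ, -, rfl⟩
    simp [eval_siteBIndicator_covPolyOnMid]
  · simp [c, eval_siteBIndicator_covPolyOn, eval_siteBIndicator_covPolyOnMid]

theorem eq_of_covPolyOn_eq {S : Finset (Fin ν)} {σ τ : Equiv.Perm (Fin ν)}
    (h : covPolyOn ν S σ = covPolyOn ν S τ) {t : Fin ν} (ht : t ∈ S) : σ t = τ t := by
  by_contra hne
  -- at `x` the `t`-factor of `covPolyOn ν S τ` vanishes, while every factor for `σ` is `±1`
  let x := Function.update (Function.update (siteBIndicator ν) (siteA ν t) 1) (siteB ν (σ t)) 0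
  have hσ : eval x (covPolyOn ν S σ) = -1 := by
    rw [covPolyOn, eval_prod, prod_eq_single_of_mem t ht]
    · simp [x]
    · intro s _ hst
      simp [x, hst, σ.injective.ne hst]
  have hτ : eval x (covPolyOn ν S τ) = 0 := by
    rw [covPolyOn, eval_prod]
    exact prod_eq_zero ht (by simp [x, Ne.symm hne])
  rw [h, hτ] at hσ
  norm_num at hσ

theorem of_mem_vars_covPolyOn {S : Finset (Fin ν)} {σ : Equiv.Perm (Fin ν)}
    {P : Fin (2 * ν) → Prop} (hP : ∀ t ∈ S, P (siteA ν t) ∧ P (siteB ν (σ t))) {x : Fin (2 * ν)}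
    (hx : x ∈ (covPolyOn ν S σ).vars) : P x := by
  obtain ⟨t, ht, hxt⟩ := mem_biUnion.1 (vars_prod _ hx)
  rcases mem_union.1 (vars_sub_subset _ hxt) with h | h <;> rw [vars_X, mem_singleton] at h <;>
    subst h
  exacts [(hP t ht).2, (hP t ht).1]

end Coverings

theorem stmt_14_general (ν : ℕ) (Ψ : Finset (Equiv.Perm (Fin ν)))
    (E : Finset (Fin (2 * ν)))
    (hdec : ∀ σ ∈ Ψ, MapsCut ν σ E)
    (hindp : LinearIndependent ℂ
      (fun v : {p : MvPolynomial (Fin (2 * ν)) ℂ | ∃ σ ∈ Ψ, p0Poly ν E σ = p} =>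
        (v : MvPolynomial (Fin (2 * ν)) ℂ)))
    (hindq : LinearIndependent ℂ
      (fun v : {p : MvPolynomial (Fin (2 * ν)) ℂ | ∃ σ ∈ Ψ, q0Poly ν E σ = p} =>
        (v : MvPolynomial (Fin (2 * ν)) ℂ)))
    (hsplit : SplitsAcross (rvbPoly ν Ψ) E) :
    ∀ σ₁ ∈ Ψ, ∀ σ₂ ∈ Ψ, ∃ σ ∈ Ψ,
      (∀ t : Fin ν, siteA ν t ∈ E → σ t = σ₁ t) ∧
      (∀ t : Fin ν, siteA ν t ∉ E → σ t = σ₂ t) := by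
  intro σ₁ hσ₁ σ₂ hσ₂
  obtain ⟨p, q, hpq, hpv, hqv⟩ := hsplit
  have hB : ∀ σ ∈ Ψ, ∀ t, siteB ν (σ t) ∈ E ↔ siteA ν t ∈ E := fun σ hσ =>
    (hdec σ hσ).siteB_mem_iff
  have hPind : LinearIndepOn ℂ id (covPolyOn ν (univ.filter fun t => siteA ν t ∈ E) '' Ψ) :=
    linearIndepOn_image_covPolyOn (SB := univ.filter fun u => siteB ν u ∈ E)
      (fun σ hσ => σ.image_univ_filter (hB σ hσ)) hindp
  have hQind : LinearIndepOn ℂ id (covPolyOn ν (univ.filter fun t => siteA ν t ∉ E) '' Ψ) :=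
    linearIndepOn_image_covPolyOn (SB := univ.filter fun u => siteB ν u ∉ E)
      (fun σ hσ => σ.image_univ_filter fun t => not_congr (hB σ hσ t)) hindq
  have hsum : ∑ σ ∈ Ψ, covPolyOn ν (univ.filter fun t => siteA ν t ∈ E) σ *
      covPolyOn ν (univ.filter fun t => siteA ν t ∉ E) σ = p * q := by
    simp_rw [← hpq, rvbPoly, covPoly_eq_covPolyOn_mul_covPolyOn _ (siteA ν · ∈ E)]
  obtain ⟨σ, hσ, hPσ, hQσ⟩ := MvPolynomial.exists_eq_and_eq_of_sum_mul_eq_mul (E := ↑E)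
    (fun σ hσ _ => of_mem_vars_covPolyOn fun t ht =>
      ⟨(mem_filter.1 ht).2, (hB σ hσ t).2 (mem_filter.1 ht).2⟩)
    (fun σ hσ _ => of_mem_vars_covPolyOn (P := (· ∉ E)) fun t ht =>
      ⟨(mem_filter.1 ht).2, mt (hB σ hσ t).1 (mem_filter.1 ht).2⟩)
    (fun _ hx => hpv hx) (fun _ hx => mem_compl.1 (hqv hx)) hPind hQind hsum hσ₁ hσ₂
  exact ⟨σ, hσ, fun t ht => eq_of_covPolyOn_eq hPσ (by simpa using ht),
    fun t ht => eq_of_covPolyOn_eq hQσ (by simpa using ht)⟩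

/-- Theorem 3.5: suppose `Ψ` is decomposable via `E` and the
families of distinct polynomials `{p⁰_ψ : ψ ∈ Ψ}` and `{q⁰_ψ : ψ ∈ Ψ}` are each
linearly independent over `ℂ`.  If `F_Ψ` splits across `(E,E')`, then `Ψ` is
factorable via `E`. -/
theorem stmt_14 (ν : ℕ) (hν : 3 ≤ ν) (Ψ : Finset (Equiv.Perm (Fin ν)))
    (hΨ : 2 ≤ Ψ.card)
    (E : Finset (Fin (2 * ν))) (hE : E.Nonempty) (hE' : E ≠ Finset.univ)
    (hdec : ∀ σ ∈ Ψ, MapsCut ν σ E)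
    (hindp : LinearIndependent ℂ
      (fun v : {p : MvPolynomial (Fin (2 * ν)) ℂ | ∃ σ ∈ Ψ, p0Poly ν E σ = p} =>
        (v : MvPolynomial (Fin (2 * ν)) ℂ)))
    (hindq : LinearIndependent ℂ
      (fun v : {p : MvPolynomial (Fin (2 * ν)) ℂ | ∃ σ ∈ Ψ, q0Poly ν E σ = p} =>
        (v : MvPolynomial (Fin (2 * ν)) ℂ)))
    (hsplit : SplitsAcross (rvbPoly ν Ψ) E) :
    ∀ σ₁ ∈ Ψ, ∀ σ₂ ∈ Ψ, ∃ σ ∈ Ψ,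
      (∀ t : Fin ν, siteA ν t ∈ E → σ t = σ₁ t) ∧
      (∀ t : Fin ν, siteA ν t ∉ E → σ t = σ₂ t) :=
  stmt_14_general ν Ψ E hdec hindp hindq hsplit
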